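/- Let F₀ ⊆ F₁ ⊆ ⋯ ⊆ F_T ⊆ F be a finite filtration of sub-σ-algebras, set Q_t := Q_{F_t} for t = 0,…,T, and let T₀ : Ω → Δ(𝒴) be an F₀-measurable random variable. Then E[ℓ(T₀, Y)] = E[d_ℓ(T₀, Q₀)] + ∑_{t=0}^{T−1} E[d_ℓ(Q_t, Q_{t+1})] + E[E_ℓ(Q_T)]. -/

import Mathlib

open MeasureTheory Finset

noncomputable section

/-- The probability simplex on a finite label set `𝒴`, identified with the set of
functions `p : 𝒴 → ℝ` with nonnegative coordinates summing to one. -/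
def simplex (𝒴 : Type*) [Fintype 𝒴] : Set (𝒴 → ℝ) :=
  {p | (∀ y, 0 ≤ p y) ∧ ∑ y, p y = 1}

/-- Conditional risk `L(p,q) := ∑_y q(y) ℓ(p,y)`. -/
def condRisk {𝒴 : Type*} [Fintype 𝒴] (ℓ : (𝒴 → ℝ) → 𝒴 → ℝ) (p q : 𝒴 → ℝ) : ℝ :=
  ∑ y, q y * ℓ p y

/-- Generalized entropy `E_ℓ(q) := L(q,q)`. -/
def gEntropy {𝒴 : Type*} [Fintype 𝒴] (ℓ : (𝒴 → ℝ) → 𝒴 → ℝ) (q : 𝒴 → ℝ) : ℝ :=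
  condRisk ℓ q q

/-- Divergence (regret) `d_ℓ(p,q) := L(p,q) - E_ℓ(q)`. -/
def divg {𝒴 : Type*} [Fintype 𝒴] (ℓ : (𝒴 → ℝ) → 𝒴 → ℝ) (p q : 𝒴 → ℝ) : ℝ :=
  condRisk ℓ p q - gEntropy ℓ q

/-! Conditioning on `m` turns `E[ℓ(p,Y)]` into `E[L(p,Q_m)]` for every `m`-measurable
simplex-valued predictor `p` (pull the bounded factor `ℓ(p,y)` out of `E[1_{Y=y} | m]`), hence
`E[d_ℓ(p,Q_m)] = E[ℓ(p,Y)] - E[ℓ(Q_m,Y)]`. Since the filtration increases, `Q_t` is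
`F_{t+1}`-measurable, so `E[d_ℓ(Q_t,Q_{t+1})] = R_t - R_{t+1}` with `R_t := E[ℓ(Q_t,Y)]`; the sum
telescopes, and `R_N = E[E_ℓ(Q_N)]`. -/

theorem MeasureTheory.integral_mul_condExp_of_bound {Ω : Type*} {m mΩ : MeasurableSpace Ω}
    {μ : Measure Ω} [IsFiniteMeasure μ] (hm : m ≤ mΩ) {f g : Ω → ℝ}
    (hf : StronglyMeasurable[m] f) (c : ℝ) (hf_bound : ∀ᵐ ω ∂μ, ‖f ω‖ ≤ c)
    (hg : Integrable g μ) :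
    ∫ ω, f ω * g ω ∂μ = ∫ ω, f ω * μ[g|m] ω ∂μ :=
  (integral_condExp hm).symm.trans
    (integral_congr_ae (condExp_stronglyMeasurable_mul_of_bound hm hf hg c hf_bound))

/-- `Q` is a simplex-valued version of the conditional law `Q_m` of `Y` given `m`. -/
structure IsCondLaw {Ω 𝒴 : Type*} [Fintype 𝒴] {mΩ : MeasurableSpace Ω} (P : Measure Ω)
    (Y : Ω → 𝒴) (m : MeasurableSpace Ω) (Q : Ω → 𝒴 → ℝ) : Prop where
  mem_simplex : ∀ ω, Q ω ∈ simplex 𝒴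
  measurable : Measurable[m] Q
  ae_eq_condExp : ∀ y, (fun ω => Q ω y) =ᵐ[P] P[{ω | Y ω = y}.indicator fun _ => (1 : ℝ) | m]

section CondLaw

variable {Ω 𝒴 : Type*} [Fintype 𝒴] {m mΩ : MeasurableSpace Ω} {P : Measure Ω} {Y : Ω → 𝒴}
  {Q p : Ω → 𝒴 → ℝ} {ℓ : (𝒴 → ℝ) → 𝒴 → ℝ} {M : ℝ}

lemma integrable_sum_mul_of_ae_eq_condExp
    (hQ : ∀ y, (fun ω => Q ω y) =ᵐ[P] P[{ω | Y ω = y}.indicator fun _ => (1 : ℝ) | m])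
    {g : Ω → 𝒴 → ℝ} (hg : ∀ y, AEStronglyMeasurable (fun ω => g ω y) P)
    (hgM : ∀ ω y, |g ω y| ≤ M) :
    Integrable (fun ω => ∑ y, Q ω y * g ω y) P :=
  integrable_finsetSum _ fun y _ =>
    (integrable_condExp.congr (hQ y).symm).mul_bdd (hg y) (.of_forall fun ω => hgM ω y)

lemma integrable_condRisk (hQ : IsCondLaw P Y m Q)
    (hℓ : ∀ y, Measurable fun p => ℓ p y) (hM : ∀ p ∈ simplex 𝒴, ∀ y, |ℓ p y| ≤ M)
    (hp : Measurable p) (hpΔ : ∀ ω, p ω ∈ simplex 𝒴) :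
    Integrable (fun ω => condRisk ℓ (p ω) (Q ω)) P :=
  integrable_sum_mul_of_ae_eq_condExp hQ.ae_eq_condExp
    (fun y => ((hℓ y).comp hp).aestronglyMeasurable) fun ω => hM _ (hpΔ ω)

variable [IsFiniteMeasure P] [MeasurableSpace 𝒴] [MeasurableSingletonClass 𝒴]

lemma integral_apply_eq_integral_sum_mul_of_ae_eq_condExp (hY : Measurable Y) (hm : m ≤ mΩ)
    (hQ : ∀ y, (fun ω => Q ω y) =ᵐ[P] P[{ω | Y ω = y}.indicator fun _ => (1 : ℝ) | m])
    {g : Ω → 𝒴 → ℝ} (hg : ∀ y, StronglyMeasurable[m] fun ω => g ω y)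
    (hgM : ∀ ω y, |g ω y| ≤ M) :
    ∫ ω, g ω (Y ω) ∂P = ∫ ω, ∑ y, Q ω y * g ω y ∂P := by
  have hind : ∀ y, Integrable ({ω | Y ω = y}.indicator fun _ => (1 : ℝ)) P := fun y =>
    (integrable_const 1).indicator (hY (measurableSet_singleton y))
  have hbound : ∀ y, ∀ᵐ ω ∂P, ‖g ω y‖ ≤ M := fun y => .of_forall fun ω => hgM ω y
  calc ∫ ω, g ω (Y ω) ∂P
      = ∫ ω, ∑ y, g ω y * {ω | Y ω = y}.indicator (fun _ => (1 : ℝ)) ω ∂P := by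
        congr 1 with ω
        classical
        simp [Set.indicator_apply]
    _ = ∑ y, ∫ ω, g ω y * {ω | Y ω = y}.indicator (fun _ => (1 : ℝ)) ω ∂P :=
        integral_finsetSum _ fun y _ =>
          (hind y).bdd_mul ((hg y).mono hm).aestronglyMeasurable (hbound y)
    _ = ∑ y, ∫ ω, g ω y * Q ω y ∂P := by
        refine sum_congr rfl fun y _ => ?_
        rw [integral_mul_condExp_of_bound hm (hg y) M (hbound y) (hind y)]
        exact integral_congr_ae (by filter_upwards [hQ y] with ω hω using by rw [hω])
    _ = ∫ ω, ∑ y, Q ω y * g ω y ∂P := by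
        rw [integral_finsetSum]
        · simp_rw [mul_comm]
        · exact fun y _ => (integrable_condExp.congr (hQ y).symm).mul_bdd
            ((hg y).mono hm).aestronglyMeasurable (hbound y)

lemma integral_loss_eq_integral_condRisk (hY : Measurable Y) (hm : m ≤ mΩ)
    (hQ : IsCondLaw P Y m Q) (hℓ : ∀ y, Measurable fun p => ℓ p y)
    (hM : ∀ p ∈ simplex 𝒴, ∀ y, |ℓ p y| ≤ M) (hp : Measurable[m] p)
    (hpΔ : ∀ ω, p ω ∈ simplex 𝒴) :
    ∫ ω, ℓ (p ω) (Y ω) ∂P = ∫ ω, condRisk ℓ (p ω) (Q ω) ∂P :=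
  integral_apply_eq_integral_sum_mul_of_ae_eq_condExp hY hm hQ.ae_eq_condExp
    (fun y => ((hℓ y).comp hp).stronglyMeasurable) fun ω => hM _ (hpΔ ω)

lemma integral_gEntropy_eq_integral_loss (hY : Measurable Y) (hm : m ≤ mΩ)
    (hQ : IsCondLaw P Y m Q) (hℓ : ∀ y, Measurable fun p => ℓ p y)
    (hM : ∀ p ∈ simplex 𝒴, ∀ y, |ℓ p y| ≤ M) :
    ∫ ω, gEntropy ℓ (Q ω) ∂P = ∫ ω, ℓ (Q ω) (Y ω) ∂P :=
  (integral_loss_eq_integral_condRisk hY hm hQ hℓ hM hQ.measurable hQ.mem_simplex).symm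

lemma integral_divg_eq_sub (hY : Measurable Y) (hm : m ≤ mΩ)
    (hQ : IsCondLaw P Y m Q) (hℓ : ∀ y, Measurable fun p => ℓ p y)
    (hM : ∀ p ∈ simplex 𝒴, ∀ y, |ℓ p y| ≤ M) (hp : Measurable[m] p)
    (hpΔ : ∀ ω, p ω ∈ simplex 𝒴) :
    ∫ ω, divg ℓ (p ω) (Q ω) ∂P = ∫ ω, ℓ (p ω) (Y ω) ∂P - ∫ ω, ℓ (Q ω) (Y ω) ∂P := by
  rw [integral_loss_eq_integral_condRisk hY hm hQ hℓ hM hp hpΔ,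
    ← integral_gEntropy_eq_integral_loss hY hm hQ hℓ hM]
  exact integral_sub (integrable_condRisk hQ hℓ hM (hp.mono hm le_rfl) hpΔ)
    (integrable_condRisk hQ hℓ hM (hQ.measurable.mono hm le_rfl) hQ.mem_simplex)

end CondLaw

theorem telescoping_decomposition_general
    {Ω 𝒴 : Type*} [Fintype 𝒴]
    [MeasurableSpace 𝒴] [MeasurableSingletonClass 𝒴]
    {mΩ : MeasurableSpace Ω} {P : Measure Ω} [IsProbabilityMeasure P]
    (Y : Ω → 𝒴) (hY : Measurable Y)
    (ℓ : (𝒴 → ℝ) → 𝒴 → ℝ)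
    (hℓmeas : ∀ y, Measurable fun p : 𝒴 → ℝ => ℓ p y)
    (hℓbdd : ∃ M : ℝ, ∀ p ∈ simplex 𝒴, ∀ y, |ℓ p y| ≤ M)
    (N : ℕ) (F : ℕ → MeasurableSpace Ω)
    (hFmono : ∀ s t : ℕ, s ≤ t → t ≤ N → F s ≤ F t)
    (hFle : ∀ t ≤ N, F t ≤ mΩ)
    (Q : ℕ → Ω → 𝒴 → ℝ)
    (hQΔ : ∀ t ≤ N, ∀ ω, Q t ω ∈ simplex 𝒴)
    (hQmeas : ∀ t ≤ N, ∀ y, Measurable[F t] fun ω => Q t ω y)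
    (hQver : ∀ t ≤ N, ∀ y, (fun ω => Q t ω y)
      =ᵐ[P] P[Set.indicator {ω | Y ω = y} (fun _ => (1 : ℝ)) | F t])
    (T₀ : Ω → 𝒴 → ℝ) (hT₀Δ : ∀ ω, T₀ ω ∈ simplex 𝒴)
    (hT₀meas : ∀ y, Measurable[F 0] fun ω => T₀ ω y) :
    ∫ ω, ℓ (T₀ ω) (Y ω) ∂P
      = ∫ ω, divg ℓ (T₀ ω) (Q 0 ω) ∂P
        + ∑ t ∈ Finset.range N, ∫ ω, divg ℓ (Q t ω) (Q (t + 1) ω) ∂P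
        + ∫ ω, gEntropy ℓ (Q N ω) ∂P := by
  obtain ⟨M, hM⟩ := hℓbdd
  have hQ : ∀ t ≤ N, IsCondLaw P Y (F t) (Q t) := fun t ht =>
    ⟨hQΔ t ht, @measurable_pi_lambda _ _ _ (F t) _ _ (hQmeas t ht), hQver t ht⟩
  set R : ℕ → ℝ := fun t => ∫ ω, ℓ (Q t ω) (Y ω) ∂P
  have hstep : ∀ t ∈ range N, ∫ ω, divg ℓ (Q t ω) (Q (t + 1) ω) ∂P = R t - R (t + 1) := by
    intro t ht
    rw [mem_range] at ht
    exact integral_divg_eq_sub hY (hFle _ ht) (hQ _ ht) hℓmeas hM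
      ((hQ t ht.le).measurable.mono (hFmono _ _ t.le_succ ht) le_rfl) (hQΔ t ht.le)
  rw [integral_divg_eq_sub hY (hFle 0 N.zero_le) (hQ 0 N.zero_le) hℓmeas hM
      (@measurable_pi_lambda _ _ _ (F 0) _ _ hT₀meas) hT₀Δ,
    integral_gEntropy_eq_integral_loss hY (hFle N le_rfl) (hQ N le_rfl) hℓmeas hM,
    sum_congr rfl hstep, sum_range_sub']
  ring

/-- telescoping decomposition along a filtration. Let
`F 0 ⊆ F 1 ⊆ ⋯ ⊆ F N ⊆ mΩ` be a finite filtration, `Q t := Q_{F t}`, and `T₀` an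
`F 0`-measurable `Δ(𝒴)`-valued predictor. Then
`E[ℓ(T₀,Y)] = E[d_ℓ(T₀,Q₀)] + ∑_{t<N} E[d_ℓ(Q_t,Q_{t+1})] + E[E_ℓ(Q_N)]`. -/
theorem telescoping_decomposition
    {Ω 𝒴 : Type*} [Fintype 𝒴] [Nonempty 𝒴]
    [MeasurableSpace 𝒴] [MeasurableSingletonClass 𝒴]
    {mΩ : MeasurableSpace Ω} {P : Measure Ω} [IsProbabilityMeasure P]
    (Y : Ω → 𝒴) (hY : Measurable Y)
    (ℓ : (𝒴 → ℝ) → 𝒴 → ℝ)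
    (hℓmeas : ∀ y, Measurable fun p : 𝒴 → ℝ => ℓ p y)
    (hℓbdd : ∃ M : ℝ, ∀ p ∈ simplex 𝒴, ∀ y, |ℓ p y| ≤ M)
    (N : ℕ) (F : ℕ → MeasurableSpace Ω)
    (hFmono : ∀ s t : ℕ, s ≤ t → t ≤ N → F s ≤ F t)
    (hFle : ∀ t ≤ N, F t ≤ mΩ)
    (Q : ℕ → Ω → 𝒴 → ℝ)
    (hQΔ : ∀ t ≤ N, ∀ ω, Q t ω ∈ simplex 𝒴)
    (hQmeas : ∀ t ≤ N, ∀ y, Measurable[F t] fun ω => Q t ω y)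
    (hQver : ∀ t ≤ N, ∀ y, (fun ω => Q t ω y)
      =ᵐ[P] P[Set.indicator {ω | Y ω = y} (fun _ => (1 : ℝ)) | F t])
    (T₀ : Ω → 𝒴 → ℝ) (hT₀Δ : ∀ ω, T₀ ω ∈ simplex 𝒴)
    (hT₀meas : ∀ y, Measurable[F 0] fun ω => T₀ ω y) :
    ∫ ω, ℓ (T₀ ω) (Y ω) ∂P
      = ∫ ω, divg ℓ (T₀ ω) (Q 0 ω) ∂P
        + ∑ t ∈ Finset.range N, ∫ ω, divg ℓ (Q t ω) (Q (t + 1) ω) ∂P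
        + ∫ ω, gEntropy ℓ (Q N ω) ∂P :=
  telescoping_decomposition_general Y hY ℓ hℓmeas hℓbdd N F hFmono hFle Q hQΔ hQmeas hQver T₀ hT₀Δ
    hT₀meas
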